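/- arXiv:1505.05622 — 2 statements merged into one kernel-verified Lean document; each statement's English description precedes it below -/
import Mathlib

section
/- Let p be a prime, let n ≥ 2, and let G be a finite non-abelian p-group such that Aut_{Z(G)}^{γ_n(G)}(G) = Autcent(G). Then γ_n(G) ⊆ Z(G) and d(γ_n(G)) = d(Z(G)), where d denotes the minimal number of generators. -/
/-- `Aut^M(G)`: automorphisms `f` of `G` with `g⁻¹ * f g ∈ M` for all `g`. -/
def autM {G : Type*} [Group G] (M : Subgroup G) : Subgroup (MulAut G) where
  carrier := {f | ∀ g : G, g⁻¹ * f g ∈ M}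
  one_mem' := by intro g; simpa using M.one_mem
  mul_mem' := by
    intro f₁ f₂ h₁ h₂ g
    have key : g⁻¹ * (f₁ * f₂) g = (g⁻¹ * f₂ g) * ((f₂ g)⁻¹ * f₁ (f₂ g)) := by
      rw [MulAut.mul_apply]; group
    rw [key]; exact M.mul_mem (h₂ g) (h₁ (f₂ g))
  inv_mem' := by
    intro f hf g
    have h := M.inv_mem (hf (f⁻¹ g))
    simpa [MulAut.apply_inv_self, mul_inv_rev] using h

/-- `Aut_N(G)`: automorphisms of `G` fixing `N` elementwise. -/
def autN {G : Type*} [Group G] (N : Subgroup G) : Subgroup (MulAut G) where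
  carrier := {f | ∀ n ∈ N, f n = n}
  one_mem' := fun n _ => rfl
  mul_mem' := by
    intro f₁ f₂ h₁ h₂ n hn
    rw [MulAut.mul_apply, h₂ n hn, h₁ n hn]
  inv_mem' := by
    intro f hf n hn
    exact f.injective (by rw [MulAut.apply_inv_self]; exact (hf n hn).symm)

/-- `Aut_c^m(G)`: `m`-th class preserving automorphisms, conjugation by
elements of `γ_m(G) = lowerCentralSeries G (m-1)`. -/
def autC (G : Type*) [Group G] (m : ℕ) : Subgroup (MulAut G) where
  carrier := {f | ∀ g : G, ∃ x ∈ (⊤ : Subgroup G).lowerCentralSeries (m - 1), f g = x⁻¹ * g * x}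
  one_mem' := fun g => ⟨1, Subgroup.one_mem _, by simp⟩
  mul_mem' := by
    intro f₁ f₂ h₁ h₂ g
    obtain ⟨x, hx, hx2⟩ := h₂ g
    obtain ⟨y, hy, hy2⟩ := h₁ (x⁻¹ * g * x)
    exact ⟨x * y, Subgroup.mul_mem _ hx hy, by rw [MulAut.mul_apply, hx2, hy2]; group⟩
  inv_mem' := by
    intro f hf g
    obtain ⟨x, hx, hx2⟩ := hf (f⁻¹ g)
    refine ⟨x⁻¹, Subgroup.inv_mem _ hx, ?_⟩
    rw [MulAut.apply_inv_self] at hx2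
    rw [inv_inv]
    conv_rhs => rw [hx2]
    group

/-- A group is purely non-abelian if it has no non-trivial abelian direct factor. -/
def PurelyNonabelian (H : Type u) [Group H] : Prop :=
  ¬ ∃ (K B : Type u) (_ : Group K) (_ : CommGroup B),
      Nontrivial B ∧ Nonempty (H ≃* K × B)

/-- `Aut_N^M(G) = Aut^M(G) ∩ Aut_N(G)`. -/
def autMN {G : Type*} [Group G] (M N : Subgroup G) : Subgroup (MulAut G) :=
  autM M ⊓ autN N

/-!
Conjugation by an element of `γ_{n-1}(G)` moves every element only within `γ_n(G)` and fixes
`Z(G)`, so by hypothesis it is a central automorphism; hence `γ_n(G) ≤ Z(G)`.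

Conversely, as `G` is non-abelian, `Z(G)` lies in a normal subgroup `K` of index `p`. For `z ∈ Z(G)`
of order `p`, an isomorphism `ψ : G/K ≃ ⟨z⟩` gives the central automorphism `g ↦ g ψ(gK)`, whose
values `g⁻¹α(g)` must lie in `γ_n(G)`; so `z ∈ γ_n(G)`. Thus `γ_n(G)` and `Z(G)` have the same
elements of order dividing `p`, and in a finite abelian `p`-group `A` there are
`|A / A^p| = p^{d(A)}` of them (Burnside's basis theorem).
-/

open scoped commutatorElement

section PGroup

variable {p : ℕ} [Fact p.Prime] {G : Type*} [Group G] [Finite G]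

theorem IsPGroup.exists_le_normal_index_eq_prime (hG : IsPGroup p G) {H : Subgroup G}
    (hH : H ≠ ⊤) : ∃ K : Subgroup G, H ≤ K ∧ K.Normal ∧ K.index = p := by
  have hp : p.Prime := Fact.out
  obtain ⟨k, hk⟩ := hG.exists_card_eq
  obtain ⟨a, ha⟩ := (hG.to_subgroup H).exists_card_eq
  have hak : a < k := by
    have hle : p ^ a ≤ p ^ k := ha ▸ hk ▸ H.card_le_card_group
    have hne : a ≠ k := by
      rintro rfl
      exact hH ((Subgroup.card_eq_iff_eq_top H).mp (ha.trans hk.symm))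
    exact lt_of_le_of_ne ((Nat.pow_le_pow_iff_right hp.one_lt).mp hle) hne
  obtain ⟨K, hK, hHK⟩ := Sylow.exists_subgroup_card_pow_prime_le p
    (hk ▸ pow_dvd_pow p (Nat.sub_le k 1)) H ha (Nat.le_sub_one_of_lt hak)
  have hindex : K.index = p := by
    have h := K.card_mul_index
    rw [hK, hk, ← Nat.sub_add_cancel (Nat.one_le_of_lt hak), pow_succ] at h
    exact Nat.eq_of_mul_eq_mul_left (pow_pos hp.pos _) h
  refine ⟨K, hHK, Subgroup.normal_of_index_eq_minFac_card ?_, hindex⟩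
  rw [hindex, hk, hp.pow_minFac (by omega)]

theorem IsPGroup.exists_monoidHom_le_ker_range_eq_zpowers (hG : IsPGroup p G) {H : Subgroup G}
    (hH : H ≠ ⊤) {z : G} (hz : orderOf z = p) :
    ∃ φ : G →* G, H ≤ φ.ker ∧ φ.range = Subgroup.zpowers z := by
  obtain ⟨K, hHK, hK, hindex⟩ := hG.exists_le_normal_index_eq_prime hH
  let e : G ⧸ K ≃* Subgroup.zpowers z :=
    mulEquivOfPrimeCardEq hindex ((Nat.card_zpowers z).trans hz)
  refine ⟨(Subgroup.zpowers z).subtype.comp (e.toMonoidHom.comp (QuotientGroup.mk' K)), ?_, ?_⟩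
  · intro x hx
    simp [(QuotientGroup.eq_one_iff x).mpr (hHK hx)]
  · rw [MonoidHom.range_comp, MonoidHom.range_eq_top.mpr
      (e.surjective.comp (QuotientGroup.mk'_surjective K)), ← MonoidHom.range_eq_map,
      Subgroup.range_subtype]

end PGroup

section CentralAutomorphism

variable {G : Type*} [Group G]

def autOfCentralHom (φ : G →* G) (hZ : φ.range ≤ Subgroup.center G) (hker : φ.range ≤ φ.ker) :
    MulAut G where
  toFun g := g * φ g
  invFun g := g * (φ g)⁻¹
  left_inv g := by
    simp [show φ (φ g) = 1 from hker ⟨g, rfl⟩]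
  right_inv g := by
    simp [show φ (φ g) = 1 from hker ⟨g, rfl⟩]
  map_mul' a b := by
    rw [map_mul, mul_assoc a b, ← mul_assoc b, Subgroup.mem_center_iff.mp (hZ ⟨a, rfl⟩) b]
    simp only [mul_assoc]

@[simp]
theorem inv_mul_autOfCentralHom_apply (φ : G →* G) (hZ : φ.range ≤ Subgroup.center G)
    (hker : φ.range ≤ φ.ker) (g : G) : g⁻¹ * autOfCentralHom φ hZ hker g = φ g :=
  inv_mul_cancel_left g (φ g)

theorem inv_mul_conj_eq_commutatorElement (x g : G) : g⁻¹ * MulAut.conj x g = ⁅g⁻¹, x⁆ := by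
  rw [MulAut.conj_apply, commutatorElement_def]
  group

theorem lowerCentralSeries_succ_le_center {m : ℕ}
    (h : autMN ((⊤ : Subgroup G).lowerCentralSeries (m + 1)) (Subgroup.center G) ≤
      autM (Subgroup.center G)) :
    (⊤ : Subgroup G).lowerCentralSeries (m + 1) ≤ Subgroup.center G := by
  rw [Subgroup.lowerCentralSeries_succ, Subgroup.commutator_le]
  intro x hx g _
  have hconj : MulAut.conj x ∈ autM (Subgroup.center G) := by
    refine h ⟨fun g' => ?_, fun z hz => ?_⟩
    · rw [inv_mul_conj_eq_commutatorElement, Subgroup.lowerCentralSeries_succ,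
        Subgroup.commutator_comm]
      exact Subgroup.commutator_mem_commutator (Subgroup.mem_top _) hx
    · rw [MulAut.conj_apply, Subgroup.mem_center_iff.mp hz x, mul_inv_cancel_right]
  have hcomm := hconj g⁻¹
  rw [inv_mul_conj_eq_commutatorElement, inv_inv, ← commutatorElement_inv] at hcomm
  exact inv_inv ⁅x, g⁆ ▸ Subgroup.inv_mem _ hcomm

theorem mem_of_pow_eq_one_of_autM_center_le {p : ℕ} [Fact p.Prime] [Finite G]
    (hG : IsPGroup p G) (hZ : Subgroup.center G ≠ ⊤) {M : Subgroup G}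
    (h : autM (Subgroup.center G) ≤ autM M) {z : G} (hzZ : z ∈ Subgroup.center G)
    (hz : z ^ p = 1) : z ∈ M := by
  by_cases hz1 : z = 1
  · exact hz1 ▸ M.one_mem
  obtain ⟨φ, hker, hrange⟩ :=
    hG.exists_monoidHom_le_ker_range_eq_zpowers hZ (orderOf_eq_prime hz hz1)
  have hrangeZ : φ.range ≤ Subgroup.center G := hrange ▸ Subgroup.zpowers_le.mpr hzZ
  have hα : autOfCentralHom φ hrangeZ (hrangeZ.trans hker) ∈ autM M :=
    h fun g => (inv_mul_autOfCentralHom_apply φ _ _ g).symm ▸ hrangeZ ⟨g, rfl⟩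
  obtain ⟨g, rfl⟩ : z ∈ φ.range := hrange ▸ Subgroup.mem_zpowers z
  simpa using hα g

end CentralAutomorphism

section AbelianPGroup

variable {p : ℕ} [Fact p.Prime]

theorem card_eq_pow_rank_of_forall_pow_eq_one {W : Type*} [CommGroup W] [Finite W]
    (hW : ∀ w : W, w ^ p = 1) : Nat.card W = p ^ Group.rank W := by
  have hp : p.Prime := Fact.out
  refine le_antisymm (Nat.le_of_dvd (pow_pos hp.pos _) (card_dvd_exponent_pow_rank' W hW)) ?_
  classical
  have : Module (ZMod p) (Additive W) := AddCommGroup.zmodModule fun x => hW x.toMul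
  let b := Module.finBasis (ZMod p) (Additive W)
  let S : Finset W := Finset.univ.image fun i => (b i).toMul
  have hS : Subgroup.closure (S : Set W) = ⊤ := by
    apply Subgroup.toAddSubgroup.injective
    have hpre : Additive.toMul ⁻¹' (S : Set W) = Set.range b := by
      ext v
      simp [S, Additive.toMul.injective.eq_iff]
    rw [Subgroup.toAddSubgroup_closure, hpre, ← Submodule.span_int_eq_addSubgroupClosure,
      ← Submodule.restrictScalars_span ℤ (ZMod p) ZMod.intCast_surjective, b.span_eq]
    rfl
  calc p ^ Group.rank W ≤ p ^ Module.finrank (ZMod p) (Additive W) :=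
        Nat.pow_le_pow_right hp.pos
          ((Group.rank_le hS).trans (Finset.card_image_le.trans (by simp)))
    _ = Nat.card W := by
        rw [Nat.card_congr Additive.ofMul,
          Module.natCard_eq_pow_finrank (K := ZMod p) (V := Additive W), Nat.card_zmod]

variable {C : Type*} [CommGroup C] [Finite C]

theorem IsPGroup.eq_top_of_sup_range_powMonoidHom_eq_top (hC : IsPGroup p C) {H : Subgroup C}
    (hH : H ⊔ (powMonoidHom p : C →* C).range = ⊤) : H = ⊤ := by
  by_contra hne
  obtain ⟨K, hHK, hK, hindex⟩ := hC.exists_le_normal_index_eq_prime hne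
  have hpow : (powMonoidHom p : C →* C).range ≤ K := by
    rintro _ ⟨x, rfl⟩
    rw [← QuotientGroup.eq_one_iff, powMonoidHom_apply, QuotientGroup.mk_pow, ← hindex]
    exact pow_card_eq_one'
  have hKtop : K = ⊤ := top_le_iff.mp (hH ▸ sup_le hHK hpow)
  have := (Fact.out : p.Prime).one_lt
  rw [hKtop, Subgroup.index_top] at hindex
  omega

theorem IsPGroup.rank_le_rank_quotient_range_powMonoidHom (hC : IsPGroup p C) :
    Group.rank C ≤ Group.rank (C ⧸ (powMonoidHom p : C →* C).range) := by
  classical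
  set R := (powMonoidHom p : C →* C).range
  obtain ⟨S, hScard, hS⟩ := Group.rank_spec (C ⧸ R)
  have hT : Subgroup.closure (S.image Quotient.out : Set C) = ⊤ := by
    have hmap :
        (Subgroup.closure (S.image Quotient.out : Set C)).map (QuotientGroup.mk' R) = ⊤ := by
      simp [MonoidHom.map_closure, Set.image_image, hS]
    apply hC.eq_top_of_sup_range_powMonoidHom_eq_top
    simpa [Subgroup.comap_map_eq] using congrArg (Subgroup.comap (QuotientGroup.mk' R)) hmap
  calc Group.rank C ≤ (S.image Quotient.out).card := Group.rank_le hT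
    _ ≤ S.card := Finset.card_image_le
    _ = _ := hScard

theorem IsPGroup.card_ker_powMonoidHom (hC : IsPGroup p C) :
    Nat.card (powMonoidHom p : C →* C).ker = p ^ Group.rank C := by
  have hW : ∀ w : C ⧸ (powMonoidHom p : C →* C).range, w ^ p = 1 := by
    rintro ⟨x⟩
    exact (QuotientGroup.eq_one_iff _).mpr ⟨x, rfl⟩
  rw [← Subgroup.index_range, Subgroup.index, card_eq_pow_rank_of_forall_pow_eq_one hW,
    le_antisymm (Group.rank_le_of_surjective _ (QuotientGroup.mk'_surjective _))
      hC.rank_le_rank_quotient_range_powMonoidHom]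

theorem IsPGroup.rank_eq_of_forall_pow_eq_one_mem (hC : IsPGroup p C) {H : Subgroup C}
    (hH : ∀ x : C, x ^ p = 1 → x ∈ H) : Group.rank H = Group.rank C := by
  have hker : (powMonoidHom p : H →* H).ker.map H.subtype = (powMonoidHom p : C →* C).ker := by
    ext x
    simp only [Subgroup.mem_map, MonoidHom.mem_ker, powMonoidHom_apply, Subgroup.coe_subtype]
    refine ⟨?_, fun hx => ⟨⟨x, hH x hx⟩, Subtype.ext hx, rfl⟩⟩
    rintro ⟨y, hy, rfl⟩
    simpa using congrArg Subtype.val hy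
  apply Nat.pow_right_injective (Fact.out : p.Prime).two_le
  dsimp only
  rw [← (hC.to_subgroup H).card_ker_powMonoidHom, ← hC.card_ker_powMonoidHom, ← hker,
    Subgroup.card_map_of_injective H.subtype_injective]

end AbelianPGroup

theorem Subgroup.rank_eq_of_le_of_forall_pow_eq_one_mem {p : ℕ} [Fact p.Prime] {G : Type*}
    [Group G] [Finite G] {H Z : Subgroup G} [IsMulCommutative Z] (hZ : IsPGroup p Z)
    (hHZ : H ≤ Z) (hH : ∀ z ∈ Z, z ^ p = 1 → z ∈ H) : Group.rank H = Group.rank Z := by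
  rw [← Group.rank_congr (Subgroup.subgroupOfEquivOfLe hHZ)]
  open scoped IsMulCommutative in
  exact hZ.rank_eq_of_forall_pow_eq_one_mem fun z hz =>
    Subgroup.mem_subgroupOf.mpr (hH z z.2 (by simpa using congrArg Subtype.val hz))

/-- if `G` is a finite non-abelian `p`-group, `n ≥ 2`, and
`Aut_{Z(G)}^{γ_n(G)}(G) = Autcent(G)`, then `γ_n(G) ⊆ Z(G)` and
`d(γ_n(G)) = d(Z(G))`, where `d` is the minimal number of generators. -/
theorem statement14 {p : ℕ} (hp : p.Prime) (n : ℕ) (hn : 2 ≤ n)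
    {G : Type u} [Group G] [Finite G]
    (hpG : IsPGroup p G) (hna : ¬ ∀ a b : G, a * b = b * a)
    (h : autMN ((⊤ : Subgroup G).lowerCentralSeries (n - 1)) (Subgroup.center G) =
      autM (Subgroup.center G)) :
    (⊤ : Subgroup G).lowerCentralSeries (n - 1) ≤ Subgroup.center G ∧
      Group.rank ((⊤ : Subgroup G).lowerCentralSeries (n - 1)) =
        Group.rank (Subgroup.center G) := by
  have : Fact p.Prime := ⟨hp⟩
  obtain ⟨m, hm⟩ : ∃ m, n - 1 = m + 1 := ⟨n - 2, by omega⟩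
  rw [hm] at h ⊢
  have hZ : Subgroup.center G ≠ ⊤ := fun hZ =>
    hna (isMulCommutative_iff.mp (Subgroup.center_eq_top_iff.mp hZ))
  have hle := lowerCentralSeries_succ_le_center h.le
  refine ⟨hle, Subgroup.rank_eq_of_le_of_forall_pow_eq_one_mem (hpG.to_subgroup _) hle
    fun z hzZ hz => ?_⟩
  exact mem_of_pow_eq_one_of_autM_center_le hpG hZ (h.ge.trans inf_le_left) hzZ hz
end

section
/- Let p be a prime and let G be a finite non-abelian p-group. Then Aut_{Z(G)}^{γ_2(G)}(G) = Autcent(G) if and only if γ_2(G) = Z(G). -/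
open scoped commutatorElement

open Subgroup

theorem ZMod.exists_monoidHom_apply_ne_one_of_dvd {n q : ℕ} [NeZero q] (hnq : n ∣ q)
    {a : ZMod n} (ha : a ≠ 0) :
    ∃ φ : Multiplicative (ZMod n) →* Multiplicative (ZMod q), φ (.ofAdd a) ≠ 1 := by
  have : NeZero n := ⟨fun h => NeZero.ne q (Nat.eq_zero_of_zero_dvd (h ▸ hnq))⟩
  refine IsCyclic.exists_apply_ne_one ⟨.ofAdd ((q / n : ℕ) : ZMod q), ?_⟩ (by simpa using ha)
  rw [IsPrimitiveRoot.iff_orderOf, orderOf_ofAdd_eq_addOrderOf, ZMod.addOrderOf_coe _ (NeZero.ne q),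
    Nat.gcd_eq_right (Nat.div_dvd_of_dvd hnq), Nat.div_div_self hnq (NeZero.ne q)]
  simp

theorem ZMod.isNilpotent_pow_nsmul {p k e : ℕ} (he : e ≠ 0) (x : ZMod (p ^ k)) :
    IsNilpotent (p ^ e • x) := by
  have hp : IsNilpotent (p : ZMod (p ^ k)) := ⟨k, by rw [← Nat.cast_pow, ZMod.natCast_self]⟩
  rw [nsmul_eq_mul, Nat.cast_pow]
  exact (Commute.all _ _).isNilpotent_mul_right (hp.pow_of_pos he)

theorem ZMod.pow_nsmul_eq_zero_of_dvd_val {p h : ℕ} [NeZero p] {x : ZMod (p ^ (h + 1))}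
    (hx : p ∣ x.val) : p ^ h • x = 0 := by
  obtain ⟨t, ht⟩ := hx
  rw [← ZMod.natCast_zmod_val x, ht, nsmul_eq_mul, ← Nat.cast_mul, ← mul_assoc,
    ← pow_succ, Nat.cast_mul, ZMod.natCast_self, zero_mul]

theorem CommGroup.exists_monoidHom_zmod_apply_ne_one {B : Type*} [CommGroup B] [Finite B]
    {q : ℕ} [NeZero q] (hB : ∀ x : B, x ^ q = 1) {b : B} (hb : b ≠ 1) :
    ∃ χ : B →* Multiplicative (ZMod q), χ b ≠ 1 := by
  classical
  obtain ⟨ι, _, n, _, ⟨e⟩⟩ := CommGroup.equiv_prod_multiplicative_zmod_of_finite B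
  obtain ⟨i, hi⟩ : ∃ i, e b i ≠ 1 := by
    contrapose! hb
    exact (MulEquiv.map_eq_one_iff e).mp (funext hb)
  have hnq : n i ∣ q := by
    simpa [orderOf_piMulSingle] using
      orderOf_dvd_of_pow_eq_one (hB (e.symm (Pi.mulSingle i (.ofAdd 1))))
  obtain ⟨φ, hφ⟩ := ZMod.exists_monoidHom_apply_ne_one_of_dvd hnq (a := (e b i).toAdd) hi
  exact ⟨(φ.comp (Pi.evalMonoidHom _ i)).comp e.toMonoidHom, hφ⟩

theorem CommGroup.exists_monoidHom_zmod_apply_ne_one_of_notMem_range_pow {A : Type*}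
    [CommGroup A] [Finite A] {q : ℕ} [NeZero q] {a : A}
    (ha : a ∉ (powMonoidHom q : A →* A).range) :
    ∃ χ : A →* Multiplicative (ZMod q), χ a ≠ 1 := by
  obtain ⟨χ, hχ⟩ := CommGroup.exists_monoidHom_zmod_apply_ne_one
    (fun x => QuotientGroup.induction_on x fun y => (QuotientGroup.eq_one_iff _).mpr ⟨y, rfl⟩)
    (b := (a : A ⧸ (powMonoidHom q : A →* A).range)) (by rwa [ne_eq, QuotientGroup.eq_one_iff])
  exact ⟨χ.comp (QuotientGroup.mk' _), hχ⟩

theorem IsPGroup.exists_mem_range_pow_notMem_range_pow_succ {p : ℕ} [Fact p.Prime]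
    {A : Type*} [CommGroup A] [Finite A] (hA : IsPGroup p A) {a : A} (ha : a ≠ 1) :
    ∃ h, a ∈ (powMonoidHom (p ^ h) : A →* A).range ∧
      a ∉ (powMonoidHom (p ^ (h + 1)) : A →* A).range := by
  classical
  obtain ⟨n, hn⟩ := IsPGroup.iff_card.mp hA
  have hex : ∃ k, a ∉ (powMonoidHom (p ^ k) : A →* A).range :=
    ⟨n, fun ⟨y, hy⟩ => ha (by rw [← hy, powMonoidHom_apply, ← hn, pow_card_eq_one'])⟩
  have hpos : Nat.find hex ≠ 0 := fun h0 => Nat.find_spec hex (h0 ▸ ⟨a, pow_one a⟩)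
  refine ⟨Nat.find hex - 1, not_not.mp (Nat.find_min hex (by omega)), ?_⟩
  rw [Nat.sub_add_cancel (Nat.one_le_iff_ne_zero.mpr hpos)]
  exact Nat.find_spec hex

section CentralAutomorphism

variable {G : Type*} [Group G]

theorem Abelianization.of_surjective : Function.Surjective (of : G →* Abelianization G) :=
  QuotientGroup.mk'_surjective _

theorem Abelianization.of_eq_one_iff {x : G} : of x = 1 ↔ x ∈ commutator G := by
  rw [← MonoidHom.mem_ker, ker_of]

theorem commutatorElement_mul_mul_of_mem_center (a b : G) {z₁ z₂ : G}
    (hz₁ : z₁ ∈ center G) (hz₂ : z₂ ∈ center G) : ⁅a * z₁, b * z₂⁆ = ⁅a, b⁆ := by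
  rw [mem_center_iff] at hz₁ hz₂
  calc ⁅a * z₁, b * z₂⁆ = a * (z₁ * b) * (z₂ * z₁⁻¹) * a⁻¹ * z₂⁻¹ * b⁻¹ := by group
    _ = a * b * (z₂ * a⁻¹) * z₂⁻¹ * b⁻¹ := by rw [← hz₁ b, ← hz₂ z₁⁻¹]; group
    _ = ⁅a, b⁆ := by rw [← hz₂ a⁻¹]; group

theorem autM_center_le_autN_commutator : autM (center G) ≤ autN (commutator G) := by
  intro f hf x hx
  have hfix : commutator G ≤ MonoidHom.eqLocus f.toMonoidHom (MonoidHom.id G) := by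
    rw [commutator_def, commutator_le]
    intro a _ b _
    have h := commutatorElement_mul_mul_of_mem_center a b (hf a) (hf b)
    rw [mul_inv_cancel_left, mul_inv_cancel_left] at h
    exact (map_commutatorElement f.toMonoidHom a b).trans h
  exact hfix hx

theorem MulAut.conj_mem_autMN_commutator_center (x : G) :
    MulAut.conj x ∈ autMN (commutator G) (center G) := by
  refine ⟨fun g => ?_, fun n hn => ?_⟩
  · have h : g⁻¹ * MulAut.conj x g = ⁅g⁻¹, x⁆ := by
      simp only [MulAut.conj_apply, commutatorElement_def, inv_inv, mul_assoc]
    rw [h]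
    exact commutator_mem_commutator (mem_top _) (mem_top _)
  · rw [MulAut.conj_apply, mem_center_iff.mp hn x, mul_inv_cancel_right]

theorem commutator_le_center_of_autMN_le (h : autMN (commutator G) (center G) ≤ autM (center G)) :
    commutator G ≤ center G := by
  rw [commutator_def, commutator_le]
  intro a _ b _
  have hab : ⁅a, b⁆ = a⁻¹⁻¹ * MulAut.conj b a⁻¹ := by
    simp only [MulAut.conj_apply, commutatorElement_def, inv_inv, mul_assoc]
  rw [hab]
  exact h (MulAut.conj_mem_autMN_commutator_center b) a⁻¹

theorem pow_val_eq_one_iff {q : ℕ} [NeZero q] {w : G} (hw : orderOf w = q) (k : ZMod q) :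
    w ^ k.val = 1 ↔ k = 0 := by
  rw [← orderOf_dvd_iff_pow_eq_one, hw, ← ZMod.natCast_eq_zero_iff, ZMod.natCast_zmod_val]

theorem exists_mem_autM_center_apply_eq_mul_pow [Finite G] {q : ℕ} [NeZero q] {w : G}
    (hw : w ∈ center G) (hwq : w ^ q = 1) (χ : G →* Multiplicative (ZMod q))
    (hχw : IsNilpotent (χ w).toAdd) :
    ∃ α ∈ autM (center G), ∀ g, α g = g * w ^ (χ g).toAdd.val := by
  let f : G →* G :=
    { toFun := fun g => g * w ^ (χ g).toAdd.val
      map_one' := by simp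
      map_mul' := fun g h => by
        simp only [map_mul, toAdd_mul, ZMod.val_add, ← pow_eq_pow_mod _ hwq, pow_add, mul_assoc]
        rw [← mul_assoc h, mem_center_iff.mp (pow_mem hw _) h, mul_assoc] }
  have hinj : Function.Injective f := by
    rw [injective_iff_map_eq_one]
    intro g hg
    have hg' : g = (w ^ (χ g).toAdd.val)⁻¹ := eq_inv_of_mul_eq_one_left hg
    have hχg : (χ g).toAdd = -((χ g).toAdd * (χ w).toAdd) := by
      conv_lhs => rw [hg']
      rw [map_inv, map_pow, toAdd_inv, toAdd_pow, nsmul_eq_mul, ZMod.natCast_zmod_val]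
    have h0 : (χ g).toAdd = 0 :=
      hχw.isUnit_one_add.mul_left_eq_zero.mp (by linear_combination hχg)
    simpa [h0] using hg'
  refine ⟨MulEquiv.ofBijective f (Finite.injective_iff_bijective.mp hinj), fun g => ?_,
    fun g => rfl⟩
  show g⁻¹ * (g * _) ∈ center G
  rw [inv_mul_cancel_left]
  exact pow_mem hw _

end CentralAutomorphism

section PGroup

variable {p : ℕ} [hp : Fact p.Prime] {G : Type*} [Group G] [Finite G]

theorem IsPGroup.exists_mem_commutator_orderOf_eq (hpG : IsPGroup p G)
    (hna : ¬ ∀ a b : G, a * b = b * a) : ∃ w ∈ commutator G, orderOf w = p := by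
  push Not at hna
  obtain ⟨a, b, hab⟩ := hna
  have hc : ⁅a, b⁆ ≠ 1 := mt commutatorElement_eq_one_iff_mul_comm.mp hab
  have hcγ : ⁅a, b⁆ ∈ commutator G := commutator_mem_commutator (mem_top a) (mem_top b)
  exact ⟨_, pow_mem hcγ _, orderOf_pow_orderOf_div (orderOf_pos _).ne' (hpG.dvd_orderOf hc)⟩

theorem exists_mem_autM_center_notMem_autMN_of_notMem_range_pow (hpG : IsPGroup p G)
    (hna : ¬ ∀ a b : G, a * b = b * a) (hγZ : commutator G ≤ center G) {z : G}
    (hz : z ∈ center G)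
    (hzp : Abelianization.of z ∉ (powMonoidHom p : Abelianization G →* _).range) :
    ∃ α ∈ autM (center G), α ∉ autMN (commutator G) (center G) := by
  obtain ⟨w, hwγ, hw⟩ := hpG.exists_mem_commutator_orderOf_eq hna
  obtain ⟨χ₀, hχ₀⟩ := CommGroup.exists_monoidHom_zmod_apply_ne_one_of_notMem_range_pow hzp
  let χ := χ₀.comp Abelianization.of
  have hχw : (χ w).toAdd = 0 := by simp [χ, Abelianization.of_eq_one_iff.mpr hwγ]
  obtain ⟨α, hα, hαg⟩ := exists_mem_autM_center_apply_eq_mul_pow (hγZ hwγ)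
    (hw ▸ pow_orderOf_eq_one w) χ (hχw ▸ IsNilpotent.zero)
  refine ⟨α, hα, fun hαN => hχ₀ ?_⟩
  have hfix := hαN.2 z hz
  rwa [hαg, mul_eq_left, pow_val_eq_one_iff hw, toAdd_eq_zero] at hfix

theorem exists_mem_autM_center_notMem_autMN_of_mem_range_pow (hpG : IsPGroup p G) {z : G}
    (hz : z ∈ center G) {h : ℕ} (hh : h ≠ 0)
    (hin : Abelianization.of z ∈ (powMonoidHom (p ^ h) : Abelianization G →* _).range)
    (hout : Abelianization.of z ∉ (powMonoidHom (p ^ (h + 1)) : Abelianization G →* _).range) :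
    ∃ α ∈ autM (center G), α ∉ autMN (commutator G) (center G) := by
  obtain ⟨χ₀, hχ₀⟩ := CommGroup.exists_monoidHom_zmod_apply_ne_one_of_notMem_range_pow hout
  obtain ⟨b, hb⟩ := hin
  obtain ⟨g, rfl⟩ := Abelianization.of_surjective b
  let χ := χ₀.comp Abelianization.of
  have hχz : (χ z).toAdd = p ^ h • (χ g).toAdd := by
    rw [← toAdd_pow, ← map_pow]
    simp [χ, ← hb]
  have hχz0 : (χ z).toAdd ≠ 0 := by simpa [χ] using hχ₀
  obtain ⟨m, hm⟩ := IsPGroup.iff_orderOf.mp hpG z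
  rcases le_or_gt m (h + 1) with hmh | hmh
  · -- `α` moves `g` by `z ^ χ(g)`, which lies outside the commutator subgroup
    have hzq : z ^ p ^ (h + 1) = 1 :=
      orderOf_dvd_iff_pow_eq_one.mp (hm ▸ pow_dvd_pow p hmh)
    obtain ⟨α, hα, hαg⟩ := exists_mem_autM_center_apply_eq_mul_pow hz hzq χ
      (hχz ▸ ZMod.isNilpotent_pow_nsmul hh _)
    refine ⟨α, hα, fun hαN => hout ?_⟩
    have hγ := hαN.1 g
    rw [hαg, inv_mul_cancel_left, ← Abelianization.of_eq_one_iff, map_pow] at hγ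
    have hd : p.Coprime (χ g).toAdd.val := (Nat.Prime.coprime_iff_not_dvd hp.out).mpr
      fun hd => hχz0 (hχz ▸ ZMod.pow_nsmul_eq_zero_of_dvd_val hd)
    have hA : IsPGroup p (Abelianization G) := hpG.of_surjective _ Abelianization.of_surjective
    rw [orderOf_eq_one_iff.mp ((hA.orderOf_coprime hd _).eq_one_of_dvd
      (orderOf_dvd_of_pow_eq_one hγ))]
    exact one_mem _
  · -- `α` moves `z` by `w ^ χ(z)`, where `w` has order exactly `p ^ (h + 1)`
    have hw : orderOf (z ^ p ^ (m - (h + 1))) = p ^ (h + 1) := by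
      rw [orderOf_pow_of_dvd (pow_ne_zero _ hp.out.ne_zero)
        (hm ▸ pow_dvd_pow p (Nat.sub_le _ _)), hm, Nat.pow_div (Nat.sub_le _ _) hp.out.pos]
      congr 1
      omega
    have hχw : (χ (z ^ p ^ (m - (h + 1)))).toAdd = p ^ (m - (h + 1)) • (χ z).toAdd := by
      rw [map_pow, toAdd_pow]
    obtain ⟨α, hα, hαg⟩ := exists_mem_autM_center_apply_eq_mul_pow (pow_mem hz _)
      (hw ▸ pow_orderOf_eq_one _) χ (hχw ▸ ZMod.isNilpotent_pow_nsmul (by omega) _)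
    refine ⟨α, hα, fun hαN => hχz0 ?_⟩
    have hfix := hαN.2 z hz
    rwa [hαg, mul_eq_left, pow_val_eq_one_iff hw] at hfix

theorem exists_mem_autM_center_notMem_autMN (hpG : IsPGroup p G)
    (hna : ¬ ∀ a b : G, a * b = b * a) (hγZ : commutator G ≤ center G) {z : G}
    (hz : z ∈ center G) (hzγ : z ∉ commutator G) :
    ∃ α ∈ autM (center G), α ∉ autMN (commutator G) (center G) := by
  have hA : IsPGroup p (Abelianization G) := hpG.of_surjective _ Abelianization.of_surjective
  obtain ⟨h, hin, hout⟩ :=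
    hA.exists_mem_range_pow_notMem_range_pow_succ (mt Abelianization.of_eq_one_iff.mp hzγ)
  rcases Nat.eq_zero_or_pos h with rfl | hh
  · exact exists_mem_autM_center_notMem_autMN_of_notMem_range_pow hpG hna hγZ hz
      (by simpa using hout)
  · exact exists_mem_autM_center_notMem_autMN_of_mem_range_pow hpG hz hh.ne' hin hout

end PGroup

/-- for a finite non-abelian `p`-group `G`,
`Aut_{Z(G)}^{γ_2(G)}(G) = Autcent(G)` iff `γ_2(G) = Z(G)`. -/
theorem statement16 {p : ℕ} (hp : p.Prime) {G : Type u} [Group G] [Finite G]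
    (hpG : IsPGroup p G) (hna : ¬ ∀ a b : G, a * b = b * a) :
    autMN ((⊤ : Subgroup G).lowerCentralSeries 1) (Subgroup.center G) =
      autM (Subgroup.center G) ↔
    (⊤ : Subgroup G).lowerCentralSeries 1 = Subgroup.center G := by
  have : Fact p.Prime := ⟨hp⟩
  rw [top_lowerCentralSeries_one]
  constructor
  · intro h
    have hγZ := commutator_le_center_of_autMN_le h.le
    refine le_antisymm hγZ fun z hz => by_contra fun hzγ => ?_
    obtain ⟨α, hα, hαN⟩ := exists_mem_autM_center_notMem_autMN hpG hna hγZ hz hzγ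
    exact hαN (h ▸ hα)
  · intro h
    have hle := autM_center_le_autN_commutator (G := G)
    rw [h] at hle ⊢
    exact inf_eq_left.mpr hle
end
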